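/- The span of {φ_0, φ_1, …, φ_{N−2}}, where φ_k(x) = c_k(L_k(x) − L_{k+2}(x)) and c_k = 1/√(4k+6), equals the space V_N = {v ∈ P_N : v(±1) = 0} of polynomials of degree at most N vanishing at ±1. -/

import Mathlib

/-!
Rodrigues' formula gives `L_n(1) = 1` and `L_n(-1) = (-1)^n`, so every `φ_k` vanishes at `±1`;
it has degree exactly `k + 2`, so `φ_0, …, φ_{N-2}` are `N - 1` linearly independent elements of
`V_N`. Conversely every element of `V_N` is divisible by `(X - 1)(X + 1)`, so `V_N` lies in the image
of the polynomials of degree `< N - 1` under multiplication by `X² - 1`, and `dim V_N ≤ N - 1`.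
-/

open Polynomial

/-- The `n`-th Legendre polynomial, via Rodrigues' formula. -/
noncomputable def legendre (n : ℕ) : Polynomial ℝ :=
  C ((1 : ℝ) / (2 ^ n * n.factorial)) * derivative^[n] ((X ^ 2 - 1) ^ n)

/-- The basis polynomial φ_k = c_k (L_k - L_{k+2}), c_k = 1/√(4k+6). -/
noncomputable def phiPoly (k : ℕ) : Polynomial ℝ :=
  (1 / Real.sqrt (4 * k + 6)) • (legendre k - legendre (k + 2))

/-- V_N = {v ∈ P_N : v(1) = v(-1) = 0}. -/
noncomputable def VN (N : ℕ) : Submodule ℝ (Polynomial ℝ) :=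
  degreeLE ℝ (N : ℕ) ⊓ LinearMap.ker (leval (1 : ℝ)) ⊓ LinearMap.ker (leval (-1 : ℝ))

namespace Polynomial

theorem linearIndependent_of_degree_injective {R ι : Type*} [CommRing R] [IsDomain R]
    {p : ι → R[X]} (hp0 : ∀ i, p i ≠ 0) (hp : Function.Injective (degree ∘ p)) :
    LinearIndependent R p := by
  classical
  rw [linearIndependent_iff']
  intro s g hsum i hi
  by_contra hgi
  have hdeg : ∀ j, g j ≠ 0 → degree (g j • p j) = degree (p j) := fun j hj => by
    rw [smul_eq_C_mul, degree_C_mul hj]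
  have hdisj : {j | j ∈ s ∧ g j • p j ≠ 0}.Pairwise fun j k => degree (g j • p j) ≠ degree (g k • p k) := by
    rintro j ⟨-, hj⟩ k ⟨-, hk⟩ hjk
    rw [hdeg j (left_ne_zero_of_smul hj), hdeg k (left_ne_zero_of_smul hk)]
    exact hp.ne hjk
  have hsup := degree_sum_eq_of_disjoint (fun j => g j • p j) s hdisj
  rw [hsum, degree_zero, eq_comm, Finset.sup_eq_bot_iff] at hsup
  exact smul_ne_zero hgi (hp0 i) (degree_eq_bot.mp (hsup i hi))

theorem natDegree_iterate_derivative_eq {R : Type*} [Semiring R] [IsAddTorsionFree R]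
    (p : R[X]) (k : ℕ) : (derivative^[k] p).natDegree = p.natDegree - k := by
  induction k with
  | zero => rfl
  | succ k ih => rw [Function.iterate_succ_apply', natDegree_derivative, ih, Nat.sub_sub]

theorem eval_iterate_derivative_X_sub_C_pow_mul {R : Type*} [CommRing R] (a : R) (n : ℕ)
    (q : R[X]) : eval a (derivative^[n] ((X - C a) ^ n * q)) = n.factorial * eval a q := by
  -- By Leibniz, only the term with all `n` derivatives on `(X - C a) ^ n` survives at `a`.
  rw [iterate_derivative_mul, eval_finsetSum, Finset.sum_eq_single 0]
  · simp [iterate_derivative_X_sub_pow_self]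
  · intro k hk hk0
    have hkn : n - (n - k) = k := by grind
    simp [iterate_derivative_X_sub_pow, hkn, hk0]
  · simp

theorem X_sub_C_mul_X_sub_C_dvd {R : Type*} [CommRing R] {a b : R} (hab : IsUnit (a - b))
    {p : R[X]} (ha : p.IsRoot a) (hb : p.IsRoot b) : (X - C a) * (X - C b) ∣ p :=
  (isCoprime_X_sub_C_of_isUnit_sub hab).mul_dvd (dvd_iff_isRoot.mpr ha) (dvd_iff_isRoot.mpr hb)

variable {K : Type*} [Field K] {a b : K}

theorem degreeLE_inf_ker_leval_le_map (hab : a ≠ b) (n : ℕ) :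
    degreeLE K n ⊓ LinearMap.ker (leval a) ⊓ LinearMap.ker (leval b) ≤
      (degreeLT K (n - 1)).map (LinearMap.mulLeft K ((X - C a) * (X - C b))) := by
  rintro p ⟨⟨hdeg, ha⟩, hb⟩
  obtain ⟨q, rfl⟩ := X_sub_C_mul_X_sub_C_dvd (sub_ne_zero.mpr hab).isUnit ha hb
  refine ⟨q, ?_, rfl⟩
  rcases eq_or_ne q 0 with rfl | hq
  · exact Submodule.zero_mem _
  have hnat := natDegree_le_iff_degree_le.mpr (mem_degreeLE.mp hdeg)
  rw [natDegree_mul (mul_ne_zero (X_sub_C_ne_zero a) (X_sub_C_ne_zero b)) hq,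
    natDegree_mul (X_sub_C_ne_zero a) (X_sub_C_ne_zero b), natDegree_X_sub_C,
    natDegree_X_sub_C] at hnat
  rw [SetLike.mem_coe, mem_degreeLT, degree_eq_natDegree hq, Nat.cast_lt]
  omega

theorem finrank_degreeLE_inf_ker_leval_le (hab : a ≠ b) (n : ℕ) :
    Module.finrank K ↥(degreeLE K n ⊓ LinearMap.ker (leval a) ⊓ LinearMap.ker (leval b)) ≤
      n - 1 :=
  calc _ ≤ Module.finrank K ↥((degreeLT K (n - 1)).map
          (LinearMap.mulLeft K ((X - C a) * (X - C b)))) :=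
        Submodule.finrank_mono (degreeLE_inf_ker_leval_le_map hab n)
    _ ≤ Module.finrank K ↥(degreeLT K (n - 1)) := Submodule.finrank_map_le _ _
    _ = n - 1 := by rw [Module.finrank_eq_card_basis (degreeLT.basis K _), Fintype.card_fin]

end Polynomial

theorem natDegree_X_sq_sub_one_pow (n : ℕ) : (((X : ℝ[X]) ^ 2 - 1) ^ n).natDegree = 2 * n := by
  rw [natDegree_pow, ← C_1, natDegree_X_pow_sub_C, mul_comm]

theorem legendre_natDegree (n : ℕ) : (legendre n).natDegree = n := by
  rw [legendre, natDegree_C_mul (by positivity), natDegree_iterate_derivative_eq,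
    natDegree_X_sq_sub_one_pow]
  omega

theorem legendre_eval_one (n : ℕ) : (legendre n).eval 1 = 1 := by
  have hsplit : ((X : ℝ[X]) ^ 2 - 1) ^ n = (X - C 1) ^ n * (X - C (-1)) ^ n := by
    rw [← mul_pow]; simp only [map_neg, C_1]; ring
  rw [legendre, eval_mul, eval_C, hsplit, eval_iterate_derivative_X_sub_C_pow_mul]
  simp only [eval_pow, eval_sub, eval_X, eval_C]
  field_simp
  norm_num

theorem legendre_eval_neg_one (n : ℕ) : (legendre n).eval (-1) = (-1) ^ n := by
  have hsplit : ((X : ℝ[X]) ^ 2 - 1) ^ n = (X - C (-1)) ^ n * (X - C 1) ^ n := by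
    rw [← mul_pow]; simp only [map_neg, C_1]; ring
  rw [legendre, eval_mul, eval_C, hsplit, eval_iterate_derivative_X_sub_C_pow_mul]
  simp only [eval_pow, eval_sub, eval_X, eval_C]
  rw [show (-1 - 1 : ℝ) = -1 * 2 by norm_num, mul_pow]
  field_simp

theorem phiPoly_natDegree (k : ℕ) : (phiPoly k).natDegree = k + 2 := by
  have hc : (1 / Real.sqrt (4 * k + 6) : ℝ) ≠ 0 := by positivity
  rw [phiPoly, smul_eq_C_mul, natDegree_C_mul hc, natDegree_sub_eq_right_of_natDegree_lt]
  · exact legendre_natDegree (k + 2)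
  · rw [legendre_natDegree, legendre_natDegree]
    omega

theorem phiPoly_ne_zero (k : ℕ) : phiPoly k ≠ 0 :=
  ne_zero_of_natDegree_gt (n := 0) (by rw [phiPoly_natDegree]; omega)

theorem phiPoly_eval_one (k : ℕ) : (phiPoly k).eval 1 = 0 := by
  simp [phiPoly, legendre_eval_one]

theorem phiPoly_eval_neg_one (k : ℕ) : (phiPoly k).eval (-1) = 0 := by
  simp [phiPoly, legendre_eval_neg_one, pow_add]

theorem phiPoly_mem_VN {k N : ℕ} (hk : k + 2 ≤ N) : phiPoly k ∈ VN N := by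
  refine ⟨⟨?_, phiPoly_eval_one k⟩, phiPoly_eval_neg_one k⟩
  rw [SetLike.mem_coe, mem_degreeLE, degree_eq_natDegree (phiPoly_ne_zero k), phiPoly_natDegree]
  exact_mod_cast hk

theorem linearIndependent_phiPoly : LinearIndependent ℝ phiPoly := by
  refine linearIndependent_of_degree_injective phiPoly_ne_zero fun j k hjk => ?_
  simp only [Function.comp_apply, degree_eq_natDegree (phiPoly_ne_zero _), phiPoly_natDegree,
    Nat.cast_inj] at hjk
  omega

theorem span_phi_eq_VN_general (N : ℕ) :
    Submodule.span ℝ (Set.range fun k : Fin (N - 1) => phiPoly k) = VN N := by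
  have hle : Submodule.span ℝ (Set.range fun k : Fin (N - 1) => phiPoly k) ≤ VN N :=
    Submodule.span_le.mpr <| Set.range_subset_iff.mpr fun k => phiPoly_mem_VN (by omega)
  have hVN : VN N ≤ _ := degreeLE_inf_ker_leval_le_map (by norm_num) N
  have : FiniteDimensional ℝ (VN N) := Submodule.finiteDimensional_of_le hVN
  refine Submodule.eq_of_le_of_finrank_le hle ?_
  have hli : LinearIndependent ℝ fun k : Fin (N - 1) => phiPoly k :=
    linearIndependent_phiPoly.comp _ Fin.val_injective
  rw [finrank_span_eq_card hli, Fintype.card_fin]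
  exact finrank_degreeLE_inf_ker_leval_le (by norm_num) N

/-- span{φ_0, …, φ_{N-2}} = V_N. -/
theorem span_phi_eq_VN (N : ℕ) (hN : 2 ≤ N) :
    Submodule.span ℝ (Set.range fun k : Fin (N - 1) => phiPoly k) = VN N :=
  span_phi_eq_VN_general N
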